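/- One step of the AAVF method is symmetric: if (q₁, p₁) is obtained from (q₀, p₀) with stepsize h, then (q₀, p₀) is obtained from (q₁, p₁) with stepsize −h. Equivalently, exchanging (q₀,p₀) ↔ (q₁,p₁) and h ↔ −h leaves the defining equations invariant. -/

import Mathlib

/-!
The averaged force `∫₀¹ f((1-σ)q₀+σq₁) dσ` is unchanged when `q₀` and `q₁` are swapped
(substitute `σ ↦ 1-σ`), so in each coordinate both steps use the same number `I`. With `I` fixed,
one coordinate of the step is an affine map of `(q, p)` whose linear part is the flow matrix
`[[cos x, sin x / ω], [-ω sin x, cos x]]`, `x = hω`; replacing `h` by `-h` inverts it because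
`cos² + sin² = 1`, and the `I`-terms cancel because `cos`, `sinc` and `φ₂(x²)` are even in `x`.
-/

noncomputable def phi2 (V : ℝ) : ℝ :=
  if V = 0 then 1/2 else (1 - Real.cos (Real.sqrt V)) / V

noncomputable def sinc (y : ℝ) : ℝ :=
  if y = 0 then 1 else Real.sin y / y

lemma sinc_eq_real_sinc : sinc = Real.sinc := rfl

lemma phi2_sq_of_ne_zero {x : ℝ} (hx : x ≠ 0) : phi2 (x ^ 2) = (1 - Real.cos x) / x ^ 2 := by
  rw [phi2, if_neg (pow_ne_zero 2 hx), Real.sqrt_sq_eq_abs, Real.cos_abs]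

lemma intervalIntegral_segment_comm {E F : Type*} [AddCommGroup E] [Module ℝ E]
    [NormedAddCommGroup F] [NormedSpace ℝ F] (g : E → F) (a b : E) :
    ∫ σ in (0:ℝ)..1, g ((1 - σ) • a + σ • b) = ∫ σ in (0:ℝ)..1, g ((1 - σ) • b + σ • a) := by
  have h := intervalIntegral.integral_comp_sub_left (a := 0) (b := 1)
    (fun σ => g ((1 - σ) • b + σ • a)) (1 : ℝ)
  simp only [sub_sub_cancel, sub_self, sub_zero] at h
  rw [← h]
  congr 1 with σ
  rw [add_comm]

noncomputable def aavfQ (h ω q p I : ℝ) : ℝ :=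
  Real.cos (h * ω) * q + h * sinc (h * ω) * p + h ^ 2 * phi2 ((h * ω) ^ 2) * I

noncomputable def aavfP (h ω q p I : ℝ) : ℝ :=
  -ω * Real.sin (h * ω) * q + Real.cos (h * ω) * p + h * sinc (h * ω) * I

lemma aavfQ_neg_aavfQ_aavfP (h ω q p I : ℝ) :
    aavfQ (-h) ω (aavfQ h ω q p I) (aavfP h ω q p I) I = q := by
  simp only [aavfQ, aavfP, sinc_eq_real_sinc, neg_mul, Real.cos_neg, Real.sinc_neg, neg_sq]
  rcases eq_or_ne (h * ω) 0 with hx | hx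
  · rcases mul_eq_zero.mp hx with rfl | rfl
    · simp
    · simp [phi2]
      ring
  · obtain ⟨hh, hω⟩ := mul_ne_zero_iff.mp hx
    rw [Real.sinc_of_ne_zero hx, phi2_sq_of_ne_zero hx]
    have hpy := Real.sin_sq_add_cos_sq (h * ω)
    generalize Real.sin (h * ω) = s, Real.cos (h * ω) = c at hpy ⊢
    field_simp
    linear_combination (q * ω ^ 2 - I) * hpy

lemma aavfP_neg_aavfQ_aavfP (h ω q p I : ℝ) :
    aavfP (-h) ω (aavfQ h ω q p I) (aavfP h ω q p I) I = p := by
  simp only [aavfQ, aavfP, sinc_eq_real_sinc, neg_mul, Real.cos_neg, Real.sin_neg,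
    Real.sinc_neg]
  rcases eq_or_ne (h * ω) 0 with hx | hx
  · rcases mul_eq_zero.mp hx with rfl | rfl <;> simp
  · obtain ⟨hh, hω⟩ := mul_ne_zero_iff.mp hx
    rw [Real.sinc_of_ne_zero hx, phi2_sq_of_ne_zero hx]
    have hpy := Real.sin_sq_add_cos_sq (h * ω)
    generalize Real.sin (h * ω) = s, Real.cos (h * ω) = c at hpy ⊢
    field_simp
    linear_combination p * ω * hpy

theorem stmt13_general (n : ℕ) (Ω : Fin n → ℝ) (h : ℝ)
    (f : (Fin n → ℝ) → (Fin n → ℝ))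
    (q₀ p₀ q₁ p₁ : Fin n → ℝ)
    (hq : ∀ j, q₁ j = Real.cos (h * Ω j) * q₀ j + h * sinc (h * Ω j) * p₀ j
        + h^2 * phi2 ((h * Ω j)^2) * ∫ σ in (0:ℝ)..1, f ((1 - σ) • q₀ + σ • q₁) j)
    (hp : ∀ j, p₁ j = -(Ω j) * Real.sin (h * Ω j) * q₀ j + Real.cos (h * Ω j) * p₀ j
        + h * sinc (h * Ω j) * ∫ σ in (0:ℝ)..1, f ((1 - σ) • q₀ + σ • q₁) j) :
    (∀ j, q₀ j = Real.cos ((-h) * Ω j) * q₁ j + (-h) * sinc ((-h) * Ω j) * p₁ j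
        + (-h)^2 * phi2 (((-h) * Ω j)^2) * ∫ σ in (0:ℝ)..1, f ((1 - σ) • q₁ + σ • q₀) j) ∧
    (∀ j, p₀ j = -(Ω j) * Real.sin ((-h) * Ω j) * q₁ j + Real.cos ((-h) * Ω j) * p₁ j
        + (-h) * sinc ((-h) * Ω j) * ∫ σ in (0:ℝ)..1, f ((1 - σ) • q₁ + σ • q₀) j) := by
  refine ⟨fun j => ?_, fun j => ?_⟩ <;>
    rw [← intervalIntegral_segment_comm (fun x => f x j), hq j, hp j]
  · exact (aavfQ_neg_aavfQ_aavfP h (Ω j) (q₀ j) (p₀ j) _).symm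
  · exact (aavfP_neg_aavfQ_aavfP h (Ω j) (q₀ j) (p₀ j) _).symm

/-- Symmetry of the AAVF method: if `(q₁,p₁)` is obtained from `(q₀,p₀)` with
stepsize `h`, then `(q₀,p₀)` is obtained from `(q₁,p₁)` with stepsize `−h`. -/
theorem stmt13 (n : ℕ) (Ω : Fin n → ℝ) (hΩ : ∀ j, 0 < Ω j) (h : ℝ) (hh : 0 < h)
    (f : (Fin n → ℝ) → (Fin n → ℝ)) (hfc : Continuous f)
    (q₀ p₀ q₁ p₁ : Fin n → ℝ)
    (hq : ∀ j, q₁ j = Real.cos (h * Ω j) * q₀ j + h * sinc (h * Ω j) * p₀ j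
        + h^2 * phi2 ((h * Ω j)^2) * ∫ σ in (0:ℝ)..1, f ((1 - σ) • q₀ + σ • q₁) j)
    (hp : ∀ j, p₁ j = -(Ω j) * Real.sin (h * Ω j) * q₀ j + Real.cos (h * Ω j) * p₀ j
        + h * sinc (h * Ω j) * ∫ σ in (0:ℝ)..1, f ((1 - σ) • q₀ + σ • q₁) j) :
    (∀ j, q₀ j = Real.cos ((-h) * Ω j) * q₁ j + (-h) * sinc ((-h) * Ω j) * p₁ j
        + (-h)^2 * phi2 (((-h) * Ω j)^2) * ∫ σ in (0:ℝ)..1, f ((1 - σ) • q₁ + σ • q₀) j) ∧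
    (∀ j, p₀ j = -(Ω j) * Real.sin ((-h) * Ω j) * q₁ j + Real.cos ((-h) * Ω j) * p₁ j
        + (-h) * sinc ((-h) * Ω j) * ∫ σ in (0:ℝ)..1, f ((1 - σ) • q₁ + σ • q₀) j) :=
  stmt13_general n Ω h f q₀ p₀ q₁ p₁ hq hp
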